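/- Let D be a 4-dicritical bidirected digraph, v a vertex of D, and let (N1+, N2+) and (N1-, N2-) be two partitions of the neighbourhood of v. Let D' be obtained from D by splitting v into two vertices v1 and v2 with out-neighbourhoods N1+, N2+ and in-neighbourhoods N1-, N2- respectively. If D' is not bidirected (i.e., N1+ ≠ N1-), then D' admits a 3-dicolouring in which v1 and v2 receive the same colour. -/

import Mathlib

/-- A (finite) digraph on vertices drawn from `ℕ`. -/
structure Dgr where
  verts : Finset ℕ
  Adj : ℕ → ℕ → Prop
  adj_mem : ∀ ⦃u v : ℕ⦄, Adj u v → u ∈ verts ∧ v ∈ verts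
  adj_irrefl : ∀ v, ¬ Adj v v

namespace Dgr

/-- number of vertices -/
def nV (D : Dgr) : ℕ := D.verts.card

/-- number of arcs -/
noncomputable def nA (D : Dgr) : ℕ := {p : ℕ × ℕ | D.Adj p.1 p.2}.ncard

/-- subdigraph relation -/
def Subd (H D : Dgr) : Prop := H.verts ⊆ D.verts ∧ ∀ ⦃u v : ℕ⦄, H.Adj u v → D.Adj u v

def ProperSubd (H D : Dgr) : Prop := Subd H D ∧ ¬ Subd D H

/-- a relation is acyclic: no directed cycle through any vertex -/
def Acy (R : ℕ → ℕ → Prop) : Prop := ∀ v, ¬ Relation.TransGen R v v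

/-- a `k`-dicolouring: each colour class induces an acyclic subdigraph -/
def IsDicol (D : Dgr) {k : ℕ} (φ : ℕ → Fin k) : Prop :=
  Acy (fun u v => D.Adj u v ∧ φ u = φ v)

def Dicolourable (D : Dgr) (k : ℕ) : Prop := ∃ φ : ℕ → Fin k, D.IsDicol φ

/-- the dichromatic number -/
noncomputable def dichr (D : Dgr) : ℕ := sInf {k | D.Dicolourable k}

/-- `k`-dicritical digraphs -/
def Dicritical (k : ℕ) (D : Dgr) : Prop :=
  D.dichr = k ∧ ∀ H : Dgr, ProperSubd H D → H.dichr < k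

def Bidirected (D : Dgr) : Prop := ∀ ⦃u v : ℕ⦄, D.Adj u v → D.Adj v u

def Oriented (D : Dgr) : Prop := ∀ ⦃u v : ℕ⦄, D.Adj u v → ¬ D.Adj v u

/-- being a bidirected complete digraph on `n` vertices -/
def IsBidirComplete (n : ℕ) (D : Dgr) : Prop :=
  D.verts.card = n ∧ ∀ u ∈ D.verts, ∀ v ∈ D.verts, u ≠ v → D.Adj u v

/-- a packing of digons (2-sets) and bidirected triangles (3-sets) -/
def IsPacking (D : Dgr) (P : Finset (Finset ℕ)) : Prop :=
  (∀ s ∈ P, (s.card = 2 ∨ s.card = 3) ∧ s ⊆ D.verts ∧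
      ∀ u ∈ s, ∀ v ∈ s, u ≠ v → D.Adj u v) ∧
  (P : Set (Finset ℕ)).Pairwise Disjoint

/-- `T(D)`: the maximum of `d + 2t` over packings of `d` digons and `t` bidirected
triangles; a digon contributes `card - 1 = 1`, a triangle `card - 1 = 2`. -/
noncomputable def TT (D : Dgr) : ℕ :=
  sSup {t | ∃ P : Finset (Finset ℕ), D.IsPacking P ∧ t = ∑ s ∈ P, (s.card - 1)}

/-- vertex deletion -/
def del (D : Dgr) (x : ℕ) : Dgr where
  verts := D.verts.erase x
  Adj u v := D.Adj u v ∧ u ≠ x ∧ v ≠ x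
  adj_mem := by
    intro u v h
    exact ⟨Finset.mem_erase.2 ⟨h.2.1, (D.adj_mem h.1).1⟩,
           Finset.mem_erase.2 ⟨h.2.2, (D.adj_mem h.1).2⟩⟩
  adj_irrefl := fun v h => D.adj_irrefl v h.1

/-- induced subdigraph on a set `S` of vertices -/
def induce (D : Dgr) (S : Finset ℕ) : Dgr where
  verts := D.verts ∩ S
  Adj u v := D.Adj u v ∧ u ∈ S ∧ v ∈ S
  adj_mem := by
    intro u v h
    exact ⟨Finset.mem_inter.2 ⟨(D.adj_mem h.1).1, h.2.1⟩,
           Finset.mem_inter.2 ⟨(D.adj_mem h.1).2, h.2.2⟩⟩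
  adj_irrefl := fun v h => D.adj_irrefl v h.1

/-- adding a digon between two (distinct, existing) vertices -/
def addDigon (D : Dgr) (x y : ℕ) : Dgr where
  verts := D.verts
  Adj u v := D.Adj u v ∨
    (x ≠ y ∧ x ∈ D.verts ∧ y ∈ D.verts ∧ ((u = x ∧ v = y) ∨ (u = y ∧ v = x)))
  adj_mem := by
    intro u v h
    rcases h with h | ⟨_, hx, hy, h | h⟩
    · exact D.adj_mem h
    · exact ⟨h.1 ▸ hx, h.2 ▸ hy⟩
    · exact ⟨h.1 ▸ hy, h.2 ▸ hx⟩
  adj_irrefl := by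
    intro v h
    rcases h with h | ⟨hxy, _, _, h | h⟩
    · exact D.adj_irrefl v h
    · exact hxy (h.1.symm.trans h.2)
    · exact hxy (h.2.symm.trans h.1)

/-- removing the digon `[x,y]` (both arcs) -/
def delDigon (D : Dgr) (x y : ℕ) : Dgr where
  verts := D.verts
  Adj u v := D.Adj u v ∧ ¬(u = x ∧ v = y) ∧ ¬(u = y ∧ v = x)
  adj_mem := by intro u v h; exact D.adj_mem h.1
  adj_irrefl := fun v h => D.adj_irrefl v h.1

/-- `D` is an Ore-composition of `D1` (digon side, replaced digon `[x,y]`) and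
`D2` (split side, split vertex `z`). -/
def IsOreComp (D1 D2 D : Dgr) : Prop :=
  Bidirected D1 ∧ Bidirected D2 ∧ Disjoint D1.verts D2.verts ∧
  ∃ (x y z : ℕ) (Z1 Z2 : Set ℕ),
    x ∈ D1.verts ∧ y ∈ D1.verts ∧ x ≠ y ∧ D1.Adj x y ∧
    z ∈ D2.verts ∧
    Z1 ∪ Z2 = {w | D2.Adj z w} ∧ Disjoint Z1 Z2 ∧ Z1.Nonempty ∧ Z2.Nonempty ∧
    D.verts = D1.verts ∪ D2.verts.erase z ∧
    (∀ u v, D.Adj u v ↔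
      (D1.Adj u v ∧ ¬(u = x ∧ v = y) ∧ ¬(u = y ∧ v = x)) ∨
      (D2.Adj u v ∧ u ≠ z ∧ v ≠ z) ∨
      (u = x ∧ v ∈ Z1 ∧ D2.Adj z v) ∨ (v = x ∧ u ∈ Z1 ∧ D2.Adj u z) ∨
      (u = y ∧ v ∈ Z2 ∧ D2.Adj z v) ∨ (v = y ∧ u ∈ Z2 ∧ D2.Adj u z))

/-- degree of a vertex: in-degree plus out-degree -/
noncomputable def deg (D : Dgr) (v : ℕ) : ℕ :=
  {u | D.Adj v u}.ncard + {u | D.Adj u v}.ncard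

end Dgr

open Dgr

/-- the class of 4-Ore digraphs -/
inductive IsOre4 : Dgr → Prop
  | k4 : ∀ D : Dgr, IsBidirComplete 4 D → IsOre4 D
  | comp : ∀ D1 D2 D : Dgr, IsOre4 D1 → IsOre4 D2 → IsOreComp D1 D2 D → IsOre4 D

namespace Dgr

/-- an emerald: a bidirected triangle all of whose vertices have degree 6 in `D` -/
def IsEmerald (D : Dgr) (s : Finset ℕ) : Prop :=
  s.card = 3 ∧ s ⊆ D.verts ∧ (∀ u ∈ s, ∀ v ∈ s, u ≠ v → D.Adj u v) ∧
  ∀ v ∈ s, D.deg v = 6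

/-- a diamond: a bidirected `K4` minus a digon `[x,y]`, the two other vertices
having degree 6 in `D` -/
def IsDiamond (D : Dgr) (s : Finset ℕ) : Prop :=
  s.card = 4 ∧ s ⊆ D.verts ∧ ∃ x ∈ s, ∃ y ∈ s, x ≠ y ∧
    (∀ u ∈ s, ∀ v ∈ s, u ≠ v → ¬(u = x ∧ v = y) → ¬(u = y ∧ v = x) → D.Adj u v) ∧
    (∀ v ∈ s, v ≠ x → v ≠ y → D.deg v = 6)

/-- boundary of an induced subdigraph given by its vertex set `S` -/
def bdry (D : Dgr) (S : Finset ℕ) : Set ℕ :=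
  {v | v ∈ S ∧ ∃ u ∈ D.verts, u ∉ S ∧ (D.Adj u v ∨ D.Adj v u)}

/-- Ore-collapsible induced subdigraph, given by its vertex set -/
def OreCollapsible (D : Dgr) (S : Finset ℕ) : Prop :=
  S ⊆ D.verts ∧ S.card < D.verts.card ∧
  ∃ u v : ℕ, u ≠ v ∧ D.bdry S = {u, v} ∧ IsOre4 ((D.induce S).addDigon u v)

/-- the potential of a digraph, with respect to parameters ε and δ -/
noncomputable def pot (D : Dgr) (ε δ : ℝ) : ℝ :=
  (10/3 + ε) * (D.nV : ℝ) - (D.nA : ℝ) - δ * (D.TT : ℝ)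

end Dgr

namespace Dgr

/-- `D'` is obtained from `D` by splitting the vertex `v` into `v1` (with
out-neighbourhood `N1p` and in-neighbourhood `N1m`) and `v2` (with
out-neighbourhood `N2p` and in-neighbourhood `N2m`). -/
def IsSplit (D : Dgr) (v v1 v2 : ℕ) (N1p N2p N1m N2m : Set ℕ) (D' : Dgr) : Prop :=
  v1 ≠ v2 ∧ v1 ∉ D.verts.erase v ∧ v2 ∉ D.verts.erase v ∧
  N1p ∪ N2p = {u | D.Adj v u} ∧ Disjoint N1p N2p ∧
  N1m ∪ N2m = {u | D.Adj u v} ∧ Disjoint N1m N2m ∧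
  D'.verts = (D.verts.erase v) ∪ {v1, v2} ∧
  (∀ u w, D'.Adj u w ↔
    (D.Adj u w ∧ u ≠ v ∧ w ≠ v) ∨
    (u = v1 ∧ w ∈ N1p) ∨ (u = v2 ∧ w ∈ N2p) ∨
    (w = v1 ∧ u ∈ N1m) ∨ (w = v2 ∧ u ∈ N2m))

end Dgr

/-! Deleting the digon `[u, v]` from a bidirected 4-dicritical digraph `D` leaves a 3-dicolourable
digraph, and any 3-dicolouring of it separates the ends of every other digon of `D`, so its only
monochromatic arcs in `D` are `uv` and `vu`. Giving `v1` and `v2` the colour of `v`, the only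
monochromatic arcs of the split digraph then join `{v1, v2}` to `u`. If the split is not bidirected,
`u` can be chosen as an out-neighbour of one of `v1`, `v2` and an in-neighbour of the other; these
arcs then lie on a path `v1 → u → v2` (or `v2 → u → v1`), so the colouring is a 3-dicolouring. -/

namespace Dgr

lemma acy_of_map_lt {R : ℕ → ℕ → Prop} (f : ℕ → ℕ) (h : ∀ a b, R a b → f a < f b) : Acy R := by
  have hlt : ∀ a b, Relation.TransGen R a b → f a < f b := by
    intro a b hab
    induction hab with
    | single hab => exact h _ _ hab
    | tail _ hbc ih => exact ih.trans (h _ _ hbc)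
  exact fun a ha => lt_irrefl _ (hlt a a ha)

lemma acy_of_subset_path {R : ℕ → ℕ → Prop} {x y z : ℕ} (hxy : x ≠ y) (hyz : y ≠ z) (hxz : x ≠ z)
    (h : ∀ a b, R a b → (a = x ∧ b = y) ∨ (a = y ∧ b = z)) : Acy R := by
  classical
  refine acy_of_map_lt (fun a => if a = x then 0 else if a = y then 1 else 2) fun a b hab => ?_
  rcases h a b hab with ⟨rfl, rfl⟩ | ⟨rfl, rfl⟩ <;> simp [hxy.symm, hyz.symm, hxz.symm]

lemma Acy.mono {R S : ℕ → ℕ → Prop} (hS : Acy S) (h : ∀ a b, R a b → S a b) : Acy R :=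
  fun x hx => hS x (Relation.TransGen.mono h x x hx)

lemma ne_of_adj (D : Dgr) {a b : ℕ} (h : D.Adj a b) : a ≠ b :=
  fun hab => D.adj_irrefl b (hab ▸ h)

lemma isDicol_of_injOn (D : Dgr) {k : ℕ} {φ : ℕ → Fin k} (hφ : Set.InjOn φ D.verts) :
    D.IsDicol φ := by
  refine acy_of_map_lt (fun _ => 0) fun a b ⟨hab, hc⟩ => ?_
  obtain ⟨ha, hb⟩ := D.adj_mem hab
  exact absurd (hφ ha hb hc) (D.ne_of_adj hab)

lemma dicolourable_nV_succ (D : Dgr) : D.Dicolourable (D.nV + 1) := by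
  let φ : ℕ → Fin (D.nV + 1) := fun x =>
    if h : x ∈ D.verts then (D.verts.equivFin ⟨x, h⟩).castSucc else 0
  refine ⟨φ, D.isDicol_of_injOn fun a ha b hb hab => ?_⟩
  simp only [φ, Finset.mem_coe.1 ha, Finset.mem_coe.1 hb, ↓reduceDIte] at hab
  exact congrArg Subtype.val (D.verts.equivFin.injective (Fin.castSucc_injective _ hab))

lemma Dicolourable.mono {D : Dgr} {k l : ℕ} (hkl : k ≤ l) (h : D.Dicolourable k) :
    D.Dicolourable l := by
  obtain ⟨φ, hφ⟩ := h
  exact ⟨fun x => Fin.castLE hkl (φ x),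
    hφ.mono fun a b hab => ⟨hab.1, Fin.castLE_injective hkl hab.2⟩⟩

lemma dicolourable_of_dichr_le {D : Dgr} {k : ℕ} (h : D.dichr ≤ k) : D.Dicolourable k :=
  (Nat.sInf_mem (s := {k | D.Dicolourable k}) ⟨_, D.dicolourable_nV_succ⟩ :).mono h

lemma Dicritical.dicolourable_of_properSubd {D H : Dgr} {k : ℕ} (hD : Dicritical (k + 1) D)
    (hH : ProperSubd H D) : H.Dicolourable k :=
  dicolourable_of_dichr_le (Nat.lt_succ_iff.mp (hD.2 H hH))

lemma Bidirected.delDigon {D : Dgr} (hD : D.Bidirected) (x y : ℕ) :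
    (D.delDigon x y).Bidirected :=
  fun _ _ ⟨hab, h1, h2⟩ => ⟨hD hab, fun h => h2 h.symm, fun h => h1 h.symm⟩

lemma Bidirected.ne_of_isDicol {D : Dgr} (hD : D.Bidirected) {k : ℕ} {φ : ℕ → Fin k}
    (hφ : D.IsDicol φ) {a b : ℕ} (hab : D.Adj a b) : φ a ≠ φ b :=
  fun hc => hφ a ((Relation.TransGen.single ⟨hab, hc⟩).tail ⟨hD hab, hc.symm⟩)

lemma properSubd_delDigon {D : Dgr} {x y : ℕ} (hxy : D.Adj x y) : ProperSubd (D.delDigon x y) D :=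
  ⟨⟨subset_rfl, fun _ _ h => h.1⟩, fun h => (h.2 hxy).2.1 ⟨rfl, rfl⟩⟩

lemma Dicritical.exists_colouring_mono_arcs_in_digon {D : Dgr} {k : ℕ} (hb : D.Bidirected)
    (hD : Dicritical (k + 1) D) {u v : ℕ} (huv : D.Adj u v) :
    ∃ φ : ℕ → Fin k,
      ∀ a b, D.Adj a b → φ a = φ b → (a = u ∧ b = v) ∨ (a = v ∧ b = u) := by
  obtain ⟨φ, hφ⟩ := hD.dicolourable_of_properSubd (properSubd_delDigon huv)
  refine ⟨φ, fun a b hab hc => ?_⟩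
  by_contra hne
  push Not at hne
  exact (hb.delDigon u v).ne_of_isDicol hφ
    ⟨hab, fun h => hne.1 h.1 h.2, fun h => hne.2 h.1 h.2⟩ hc

def extendColouring {k : ℕ} (v v1 v2 : ℕ) (φ : ℕ → Fin k) : ℕ → Fin k :=
  fun x => if x = v1 ∨ x = v2 then φ v else φ x

namespace IsSplit

variable {D D' : Dgr} {v v1 v2 : ℕ} {N1p N2p N1m N2m : Set ℕ}

lemma swap (h : D.IsSplit v v1 v2 N1p N2p N1m N2m D') :
    D.IsSplit v v2 v1 N2p N1p N2m N1m D' := by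
  obtain ⟨h12, hv1, hv2, hNp, hdp, hNm, hdm, hverts, hadj⟩ := h
  refine ⟨h12.symm, hv2, hv1, by rwa [Set.union_comm], hdp.symm, by rwa [Set.union_comm],
    hdm.symm, by rw [hverts, Finset.pair_comm], fun a b => ?_⟩
  rw [hadj]
  tauto

lemma exists_crossing (hb : D.Bidirected) (h : D.IsSplit v v1 v2 N1p N2p N1m N2m D')
    (hne : N1p ≠ N1m) : ∃ u, (u ∈ N1p ∧ u ∈ N2m) ∨ (u ∈ N1m ∧ u ∈ N2p) := by
  obtain ⟨-, -, -, hNp, -, hNm, -⟩ := h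
  by_contra! hcross
  refine hne (Set.ext fun u => ⟨fun hu => ?_, fun hu => ?_⟩)
  · exact (hNm.symm.subset (hb (hNp.subset (Or.inl hu)))).resolve_right ((hcross u).1 hu)
  · exact (hNp.symm.subset (hb (hNm.subset (Or.inl hu)))).resolve_right ((hcross u).2 hu)

lemma adj_of_mem_out (h : D.IsSplit v v1 v2 N1p N2p N1m N2m D') {w : ℕ} (hw : w ∈ N1p ∪ N2p) :
    D.Adj v w :=
  h.2.2.2.1.subset hw

lemma adj_of_mem_in (h : D.IsSplit v v1 v2 N1p N2p N1m N2m D') {w : ℕ} (hw : w ∈ N1m ∪ N2m) :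
    D.Adj w v :=
  h.2.2.2.2.2.1.subset hw

lemma ne_of_mem (h : D.IsSplit v v1 v2 N1p N2p N1m N2m D') {w : ℕ} (hw : w ∈ D.verts)
    (hwv : w ≠ v) : w ≠ v1 ∧ w ≠ v2 := by
  have hw' : w ∈ D.verts.erase v := Finset.mem_erase.2 ⟨hwv, hw⟩
  exact ⟨fun h1 => h.2.1 (h1 ▸ hw'), fun h2 => h.2.2.1 (h2 ▸ hw')⟩

lemma extendColouring_of_mem (h : D.IsSplit v v1 v2 N1p N2p N1m N2m D') {k : ℕ}
    (φ : ℕ → Fin k) {w : ℕ} (hw : w ∈ D.verts) (hwv : w ≠ v) :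
    extendColouring v v1 v2 φ w = φ w := by
  simp [extendColouring, h.ne_of_mem hw hwv]

lemma adj_of_extendColouring_eq (h : D.IsSplit v v1 v2 N1p N2p N1m N2m D') {k : ℕ}
    {φ : ℕ → Fin k} {u : ℕ} (hu1 : u ∈ N1p) (hu2 : u ∈ N2m)
    (hφ : ∀ a b, D.Adj a b → φ a = φ b → (a = u ∧ b = v) ∨ (a = v ∧ b = u))
    {a b : ℕ} (hab : D'.Adj a b)
    (hc : extendColouring v v1 v2 φ a = extendColouring v v1 v2 φ b) :
    (a = v1 ∧ b = u) ∨ (a = u ∧ b = v2) := by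
  have hψ1 : extendColouring v v1 v2 φ v1 = φ v := if_pos (Or.inl rfl)
  have hψ2 : extendColouring v v1 v2 φ v2 = φ v := if_pos (Or.inr rfl)
  have hψ : ∀ w ∈ D.verts, w ≠ v → extendColouring v v1 v2 φ w = φ w :=
    fun _ => h.extendColouring_of_mem φ
  have out_eq : ∀ w, D.Adj v w → φ v = φ w → w = u := fun w hw hvw => by
    rcases hφ v w hw hvw with ⟨rfl, rfl⟩ | ⟨-, rfl⟩
    exacts [(D.adj_irrefl _ hw).elim, rfl]
  have in_eq : ∀ w, D.Adj w v → φ w = φ v → w = u := fun w hw hwv => by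
    rcases hφ w v hw hwv with ⟨rfl, -⟩ | ⟨rfl, -⟩
    exacts [rfl, (D.adj_irrefl _ hw).elim]
  obtain ⟨-, -, -, -, hdp, -, hdm, -, hadj⟩ := id h
  rcases (hadj a b).1 hab with
    ⟨hDab, hav, hbv⟩ | ⟨rfl, hb⟩ | ⟨rfl, hb⟩ | ⟨rfl, ha⟩ | ⟨rfl, ha⟩
  · rw [hψ _ (D.adj_mem hDab).1 hav, hψ _ (D.adj_mem hDab).2 hbv] at hc
    rcases hφ a b hDab hc with ⟨-, rfl⟩ | ⟨rfl, -⟩ <;> contradiction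
  · have hvb := h.adj_of_mem_out (Or.inl hb)
    rw [hψ1, hψ _ (D.adj_mem hvb).2 (D.ne_of_adj hvb).symm] at hc
    exact Or.inl ⟨rfl, out_eq b hvb hc⟩
  · have hvb := h.adj_of_mem_out (Or.inr hb)
    rw [hψ2, hψ _ (D.adj_mem hvb).2 (D.ne_of_adj hvb).symm] at hc
    exact absurd (out_eq b hvb hc ▸ hb) (Set.disjoint_left.mp hdp hu1)
  · have hav := h.adj_of_mem_in (Or.inl ha)
    rw [hψ1, hψ _ (D.adj_mem hav).1 (D.ne_of_adj hav)] at hc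
    exact absurd (in_eq a hav hc ▸ hu2) (Set.disjoint_left.mp hdm ha)
  · have hav := h.adj_of_mem_in (Or.inr ha)
    rw [hψ2, hψ _ (D.adj_mem hav).1 (D.ne_of_adj hav)] at hc
    exact Or.inr ⟨in_eq a hav hc, rfl⟩

lemma isDicol_extendColouring (h : D.IsSplit v v1 v2 N1p N2p N1m N2m D') {k : ℕ}
    {φ : ℕ → Fin k} {u : ℕ} (hu1 : u ∈ N1p) (hu2 : u ∈ N2m)
    (hφ : ∀ a b, D.Adj a b → φ a = φ b → (a = u ∧ b = v) ∨ (a = v ∧ b = u)) :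
    D'.IsDicol (extendColouring v v1 v2 φ) := by
  have hvu := h.adj_of_mem_out (Or.inl hu1)
  obtain ⟨hu_v1, hu_v2⟩ := h.ne_of_mem (D.adj_mem hvu).2 (D.ne_of_adj hvu).symm
  exact acy_of_subset_path hu_v1.symm hu_v2 h.1
    fun a b ⟨hab, hc⟩ => h.adj_of_extendColouring_eq hu1 hu2 hφ hab hc

lemma exists_dicol_of_crossing (hb : D.Bidirected) {k : ℕ} (hD : Dicritical (k + 1) D)
    (h : D.IsSplit v v1 v2 N1p N2p N1m N2m D') {u : ℕ} (hu1 : u ∈ N1p) (hu2 : u ∈ N2m) :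
    ∃ ψ : ℕ → Fin k, D'.IsDicol ψ ∧ ψ v1 = ψ v2 := by
  obtain ⟨φ, hφ⟩ := hD.exists_colouring_mono_arcs_in_digon hb (h.adj_of_mem_in (Or.inr hu2))
  exact ⟨_, h.isDicol_extendColouring hu1 hu2 hφ, by simp [extendColouring]⟩

end IsSplit

end Dgr

theorem stmt_5_general (D : Dgr) (hb : D.Bidirected) (hD : Dgr.Dicritical 4 D)
    (v v1 v2 : ℕ)
    (N1p N2p N1m N2m : Set ℕ) (D' : Dgr)
    (hsplit : D.IsSplit v v1 v2 N1p N2p N1m N2m D')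
    (hnotbidir : N1p ≠ N1m) :
    ∃ φ : ℕ → Fin 3, D'.IsDicol φ ∧ φ v1 = φ v2 := by
  obtain ⟨u, ⟨hu1, hu2⟩ | ⟨hu1, hu2⟩⟩ := hsplit.exists_crossing hb hnotbidir
  · exact hsplit.exists_dicol_of_crossing hb hD hu1 hu2
  · obtain ⟨ψ, hψ, hψ12⟩ := hsplit.swap.exists_dicol_of_crossing hb hD hu2 hu1
    exact ⟨ψ, hψ, hψ12.symm⟩

/-- splitting a vertex of a 4-dicritical bidirected digraph into two
vertices yields a digraph with a 3-dicolouring giving both split vertices the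
same colour, unless the result is bidirected (i.e. `N1p = N1m`). -/
theorem stmt_5 (D : Dgr) (hb : D.Bidirected) (hD : Dgr.Dicritical 4 D)
    (v v1 v2 : ℕ) (hv : v ∈ D.verts)
    (N1p N2p N1m N2m : Set ℕ) (D' : Dgr)
    (hsplit : D.IsSplit v v1 v2 N1p N2p N1m N2m D')
    (hnotbidir : N1p ≠ N1m) :
    ∃ φ : ℕ → Fin 3, D'.IsDicol φ ∧ φ v1 = φ v2 :=
  stmt_5_general D hb hD v v1 v2 N1p N2p N1m N2m D' hsplit hnotbidir
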